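/- With π the reduction map on nonassociative words, if π(u v₁ v₂ ⋯ vₙ) = π(v) (left-normed product, i.e., (⋯((u v₁)v₂)⋯)vₙ), then π(u) = π(v vₙ ⋯ v₂ v₁). -/

import Mathlib

inductive Wd (X : Type) : Type
  | one : Wd X
  | of : X → Wd X
  | mul : Wd X → Wd X → Wd X

namespace Wd

variable {X : Type}

/-- Product of possibly-empty words: the empty word `one` acts as identity;
otherwise the product is the formal (magma) product. -/
def cmul : Wd X → Wd X → Wd X
  | one, v => v
  | u, one => u
  | u, v => mul u v

/-- Number of letters of a word. -/
def len : Wd X → ℕ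
  | one => 0
  | of _ => 1
  | mul u v => len u + len v

/-- The set of subwords of a word. -/
def Sub : Wd X → Set (Wd X)
  | one => {one}
  | of x => {of x}
  | mul u v => insert (mul u v) (Sub u ∪ Sub v)

/-- `v ∈ W(X)`: `v` is an element of `P(X) ∪ {1}` (the empty word occurs only
as the whole word) having no subword of the form `uu` or `(uw)w`. -/
def InW (v : Wd X) : Prop :=
  (∀ w ∈ Sub v, w = one → v = one) ∧
  (∀ u : Wd X, mul u u ∉ Sub v) ∧
  (∀ u w : Wd X, mul (mul u w) w ∉ Sub v)

/-- Left-normed product of a list of words. -/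
def prodL : List (Wd X) → Wd X
  | [] => one
  | a :: l => l.foldl cmul a

/-- The left-normed symmetric word `b₁b₂⋯b_k b_{k-1}⋯b₁` built from `[b₁,…,b_k]`. -/
def symW (l : List (Wd X)) : Wd X := prodL (l ++ l.reverse.tail)

/-- `lpad a l` is the left-normed product `a·l₁⋯lₙ`, with the convention that
`1·l₁⋯lₙ` means `l₁⋯lₙ`. -/
def lpad (a : Wd X) (l : List (Wd X)) : Wd X :=
  match a with
  | one => prodL l
  | _ => prodL (a :: l)

/-- Specification of the reduction map `π : P(X) ∪ {1} → W(X)`. -/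
structure PiSpec (π : Wd X → Wd X) : Prop where
  map_one : π one = one
  map_of : ∀ x : X, π (of x) = of x
  mem_W : ∀ v, InW (π v)
  fix : ∀ v, InW v → π v = v
  cancel_sq : ∀ u, InW u → π (mul u u) = one
  cancel : ∀ a v, InW (mul a v) → π (mul (mul a v) v) = a
  keep : ∀ u v, InW u → InW v → InW (mul u v) → π (mul u v) = mul u v
  red : ∀ u v, π (mul u v) = π (cmul (π u) (π v))

end Wd


namespace Wd

variable {X : Type}

lemma cmul_one' (a : Wd X) : cmul a one = a := by cases a <;> rfl

lemma one_cmul' (b : Wd X) : cmul one b = b := by cases b <;> rfl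

lemma mul_ne_one (a b : Wd X) : mul a b ≠ one := fun h => by cases h

lemma cmul_ne (a b : Wd X) (ha : a ≠ one) (hb : b ≠ one) : cmul a b = mul a b := by
  cases a <;> cases b <;> first | rfl | simp_all

lemma self_mem_sub (v : Wd X) : v ∈ Sub v := by cases v <;> simp [Sub]

lemma mem_sub_mul {w u v : Wd X} :
    w ∈ Sub (mul u v) ↔ w = mul u v ∨ w ∈ Sub u ∨ w ∈ Sub v := by
  simp [Sub]

lemma fixpi {π : Wd X → Wd X} (hπ : PiSpec π) (a : Wd X) : π (π a) = π a :=
  hπ.fix _ (hπ.mem_W a)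

lemma red' {π : Wd X → Wd X} (hπ : PiSpec π) (a b : Wd X) :
    π (cmul a b) = π (cmul (π a) (π b)) := by
  by_cases ha : a = one
  · subst ha
    rw [one_cmul', hπ.map_one, one_cmul', fixpi hπ]
  · by_cases hb : b = one
    · subst hb
      rw [cmul_one', hπ.map_one, cmul_one', fixpi hπ]
    · rw [cmul_ne a b ha hb, hπ.red]

lemma keyW {π : Wd X → Wd X} (hπ : PiSpec π) (A B : Wd X)
    (hA : InW A) (hB : InW B) : π (cmul (π (cmul A B)) B) = A := by
  by_cases hBo : B = one
  · subst hBo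
    rw [cmul_one', cmul_one', fixpi hπ, hπ.fix _ hA]
  · by_cases hAo : A = one
    · subst hAo
      rw [one_cmul', hπ.fix _ hB, cmul_ne B B hBo hBo, hπ.cancel_sq _ hB]
    · rw [cmul_ne A B hAo hBo]
      by_cases hW : InW (mul A B)
      · rw [hπ.fix _ hW, cmul_ne _ B (mul_ne_one A B) hBo, hπ.cancel _ _ hW]
      · -- the failure of InW (mul A B) forces A = B or A = mul c B
        have hone : one ∉ Sub A := fun hm => hAo (hA.1 one hm rfl)
        have honeB : one ∉ Sub B := fun hm => hBo (hB.1 one hm rfl)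
        have hcase : A = B ∨ ∃ c, A = mul c B := by
          by_contra hc
          push_neg at hc
          apply hW
          refine ⟨?_, ?_, ?_⟩
          · intro w hw hwone
            subst hwone
            rcases mem_sub_mul.1 hw with h1 | h1 | h1
            · exact absurd h1.symm (mul_ne_one A B)
            · exact absurd h1 hone
            · exact absurd h1 honeB
          · intro c hc2
            rcases mem_sub_mul.1 hc2 with h1 | h1 | h1
            · cases h1
              exact hc.1 rfl
            · exact hA.2.1 c h1
            · exact hB.2.1 c h1
          · intro c w hc2
            rcases mem_sub_mul.1 hc2 with h1 | h1 | h1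
            · cases h1
              exact hc.2 c rfl
            · exact hA.2.2 c w h1
            · exact hB.2.2 c w h1
        rcases hcase with rfl | ⟨c, rfl⟩
        · rw [hπ.cancel_sq _ hA, one_cmul', hπ.fix _ hB]
        · have hc_ne : c ≠ one := by
            intro hco
            subst hco
            exact hone (mem_sub_mul.2 (Or.inr (Or.inl (self_mem_sub one))))
          rw [hπ.cancel _ _ hA, cmul_ne c B hc_ne hBo, hπ.fix _ hA]

lemma key' {π : Wd X → Wd X} (hπ : PiSpec π) (a b : Wd X) :
    π (cmul (cmul a b) b) = π a := by
  rw [red' hπ, red' hπ a b]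
  exact keyW hπ (π a) (π b) (hπ.mem_W a) (hπ.mem_W b)

end Wd

open Wd in
/-- If `π(u v₁v₂⋯vₙ) = π(v)` (left-normed), then `π(u) = π(v vₙ⋯v₂v₁)`. -/
theorem pi_transfer {X : Type} (π : Wd X → Wd X) (hπ : PiSpec π)
    (u v : Wd X) (vs : List (Wd X))
    (h : π (prodL (u :: vs)) = π v) :
    π u = π (prodL (v :: vs.reverse)) := by
  induction vs using List.reverseRecOn generalizing v with
  | nil =>
    simpa [prodL] using h
  | append_singleton l w ih =>
    have hpl : prodL (u :: (l ++ [w])) = cmul (prodL (u :: l)) w := by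
      simp [prodL, List.foldl_append]
    have hgoal : prodL (v :: (l ++ [w]).reverse) = prodL (cmul v w :: l.reverse) := by
      simp [prodL, List.reverse_append]
    rw [hgoal]
    apply ih
    have h2 : π (cmul (cmul (prodL (u :: l)) w) w) = π (prodL (u :: l)) :=
      key' hπ _ _
    rw [hpl] at h
    rw [red' hπ, h] at h2
    rw [red' hπ v w]
    exact h2.symm
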